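/- arXiv:1811.10390 — 5 statements merged into one kernel-verified Lean document; each statement's English description precedes it below -/
import Mathlib

section
/- Let f be a continuous function on an interval (r,1) ⊂ (0,1), let k: ℝ → ℝ be a bounded 2π-periodic Borel function, and let μ be a Borel charge on the unit disk 𝔻. Then ∫_{𝔻 ∖ closure(D(r))} f(|z|) k(arg z) dμ(z) = ∫_{(r,1)} f(t) dμ^rad(t;k), where μ^rad(t;k) := ∫_{|z|≤t} k(arg z) dμ(z) and the right-hand side is a Stieltjes integral over the open interval (r,1). -/
open MeasureTheory Filter Set

noncomputable section

/-- A function `h : ℝ → ℝ` is `ρ`-trigonometrically convex: for `ρ = 0` this means `h` is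
constant; for `ρ ≠ 0` it means that
`h θ ≤ (sin (ρ(θ₂-θ)) h θ₁ + sin (ρ(θ-θ₁)) h θ₂) / sin (ρ(θ₂-θ₁))`
for all `θ ∈ (θ₁, θ₂)` whenever `0 < θ₂ - θ₁ < π/ρ`. -/
def TrigConvex (ρ : ℝ) (h : ℝ → ℝ) : Prop :=
  (ρ = 0 → ∃ c : ℝ, ∀ θ, h θ = c) ∧
  (ρ ≠ 0 → ∀ θ₁ θ₂ θ : ℝ, 0 < θ₂ - θ₁ → θ₂ - θ₁ < Real.pi / ρ → θ₁ < θ → θ < θ₂ →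
    h θ ≤ (Real.sin (ρ * (θ₂ - θ)) * h θ₁ + Real.sin (ρ * (θ - θ₁)) * h θ₂) /
      Real.sin (ρ * (θ₂ - θ₁)))

/-- `u` is subharmonic on the set `U ⊆ ℂ`: `u` is upper semicontinuous on `U` and satisfies
the sub-mean-value inequality on every circle whose closed disk lies in `U`.
(Functions here are real-valued; the paper's value `-∞` is not modelled.) -/
def SubharmonicOn (u : ℂ → ℝ) (U : Set ℂ) : Prop :=
  UpperSemicontinuousOn u U ∧
  ∀ z ∈ U, ∀ r : ℝ, 0 < r → Metric.closedBall z r ⊆ U →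
    u z ≤ (2 * Real.pi)⁻¹ * ∫ θ in (0:ℝ)..(2 * Real.pi), u (circleMap z r θ)

/-- The Laplacian of a (smooth) function `φ : ℂ → ℝ`, as the sum of the second directional
derivatives in the directions `1` and `I`. -/
def lap (φ : ℂ → ℝ) (z : ℂ) : ℝ :=
  fderiv ℝ (fun w => fderiv ℝ φ w 1) z 1 +
    fderiv ℝ (fun w => fderiv ℝ φ w Complex.I) z Complex.I

/-- The pair of positive measures `(μp, μn)` represents the Riesz charge
`μ_M = (1/(2π)) Δ M = μp - μn` of `M` on the open set `U`, in the distributional sense: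
`∫ M Δφ dA = 2π (∫ φ dμp - ∫ φ dμn)` for every smooth `φ` compactly supported in `U`. -/
def IsRieszChargeOn (M : ℂ → ℝ) (U : Set ℂ) (μp μn : MeasureTheory.Measure ℂ) : Prop :=
  ∀ φ : ℂ → ℝ, ContDiff ℝ (⊤ : ℕ∞) φ → HasCompactSupport φ → tsupport φ ⊆ U →
    ∫ z, M z * lap φ z = 2 * Real.pi * ((∫ z, φ z ∂μp) - ∫ z, φ z ∂μn)

/-- `μ` is the Riesz measure `(1/(2π)) Δ u` of `u` on `U`. -/
def IsRieszMeasureOn (u : ℂ → ℝ) (U : Set ℂ) (μ : MeasureTheory.Measure ℂ) : Prop :=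
  IsRieszChargeOn u U μ 0

/-- `M` is δ-subharmonic on `U`: a difference of two subharmonic functions on `U`. -/
def DeltaSubharmonicOn (M : ℂ → ℝ) (U : Set ℂ) : Prop :=
  ∃ M₁ M₂ : ℂ → ℝ, SubharmonicOn M₁ U ∧ SubharmonicOn M₂ U ∧ ∀ z ∈ U, M z = M₁ z - M₂ z

/-- For a positive measure `μ` on `ℂ` and a weight `h ≥ 0`, the measure on `ℝ` whose
distribution function is the radial counting function `r ↦ μ^rad(r; h) = ∫_{|z| ≤ r} h(arg z) dμ`;
it is the pushforward under `z ↦ |z|` of the measure `h (arg z) dμ(z)`.  Integration against it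
is the Stieltjes integral `∫ … dμ^rad(·; h)`. -/
def radMeasure (μ : MeasureTheory.Measure ℂ) (h : ℝ → ℝ) : MeasureTheory.Measure ℝ :=
  MeasureTheory.Measure.map (fun z => ‖z‖)
    (μ.withDensity fun z => ENNReal.ofReal (h (Complex.arg z)))

/-- The sequence `Z` has no limit points in `U`: every compact subset of `U` contains only
finitely many terms of `Z`. -/
def NoLimitPointsIn (Z : ℕ → ℂ) (U : Set ℂ) : Prop :=
  ∀ K : Set ℂ, IsCompact K → K ⊆ U → {k : ℕ | Z k ∈ K}.Finite

/-- `f` vanishes on the sequence `Z` in `U`, counting multiplicities: at every `z ∈ U` the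
number of indices `k` with `Z k = z` is at most the order of vanishing of `f` at `z`. -/
def VanishesOn (f : ℂ → ℂ) (Z : ℕ → ℂ) (U : Set ℂ) : Prop :=
  ∀ z ∈ U, ∃ g : ℂ → ℂ, AnalyticAt ℂ g z ∧
    ∀ᶠ w in nhds z, f w = (w - z) ^ (Nat.card {k : ℕ // Z k = z}) * g w

/-! The Stieltjes measure of `t ↦ μ^rad(t; h)` is the pushforward under `z ↦ |z|` of
`h⁺(arg z) dμ(z)`, so integrating `f` against it gives `∫ f(|z|) h⁺(arg z) dμ(z)`.
Since `k = k⁺ - (-k)⁺`, the theorem follows by splitting both `k` and `μ = μp - μn`. -/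

section WithDensityMap

variable {α β : Type*} [MeasurableSpace α] [MeasurableSpace β] {ν : Measure α} {φ : α → β}
  {g : α → ℝ} {F : β → ℝ}

theorem integral_map_withDensity_ofReal (hφ : Measurable φ) (hg : Measurable g)
    (hF : AEStronglyMeasurable F ((ν.withDensity (fun x => ENNReal.ofReal (g x))).map φ)) :
    ∫ y, F y ∂(ν.withDensity (fun x => ENNReal.ofReal (g x))).map φ
      = ∫ x, max (g x) 0 * F (φ x) ∂ν := by
  rw [integral_map hφ.aemeasurable hF]
  exact integral_withDensity_eq_integral_smul hg.real_toNNReal _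

theorem integrable_map_withDensity_ofReal_iff (hφ : Measurable φ) (hg : Measurable g)
    (hF : AEStronglyMeasurable F ((ν.withDensity (fun x => ENNReal.ofReal (g x))).map φ)) :
    Integrable F ((ν.withDensity (fun x => ENNReal.ofReal (g x))).map φ)
      ↔ Integrable (fun x => max (g x) 0 * F (φ x)) ν := by
  rw [integrable_map_measure hF hφ.aemeasurable]
  exact integrable_withDensity_iff_integrable_smul hg.real_toNNReal

theorem restrict_map_withDensity (hφ : Measurable φ) {s : Set β} (hs : MeasurableSet s)
    (w : α → ENNReal) :
    ((ν.withDensity w).map φ).restrict s = ((ν.restrict (φ ⁻¹' s)).withDensity w).map φ := by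
  rw [Measure.restrict_map hφ hs, restrict_withDensity (hφ hs)]

end WithDensityMap

theorem preimage_norm_Ioo {E : Type*} [SeminormedAddCommGroup E] (a b : ℝ) :
    (fun z : E => ‖z‖) ⁻¹' Ioo a b = Metric.ball 0 b \ Metric.closedBall 0 a := by
  ext z
  simp [and_comm]

section RadMeasure

variable {ν : Measure ℂ} {h : ℝ → ℝ} {F : ℝ → ℝ} {s : Set ℝ}

theorem setIntegral_radMeasure (hh : Measurable h) (hs : MeasurableSet s)
    (hF : AEStronglyMeasurable F ((radMeasure ν h).restrict s)) :
    ∫ t in s, F t ∂radMeasure ν h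
      = ∫ z in (fun z : ℂ => ‖z‖) ⁻¹' s, max (h z.arg) 0 * F ‖z‖ ∂ν := by
  rw [radMeasure, restrict_map_withDensity measurable_norm hs] at *
  exact integral_map_withDensity_ofReal measurable_norm (hh.comp Complex.measurable_arg) hF

theorem integrableOn_radMeasure_iff (hh : Measurable h) (hs : MeasurableSet s)
    (hF : AEStronglyMeasurable F ((radMeasure ν h).restrict s)) :
    IntegrableOn F s (radMeasure ν h)
      ↔ IntegrableOn (fun z : ℂ => max (h z.arg) 0 * F ‖z‖) ((fun z : ℂ => ‖z‖) ⁻¹' s) ν := by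
  rw [IntegrableOn, radMeasure, restrict_map_withDensity measurable_norm hs] at *
  exact integrable_map_withDensity_ofReal_iff measurable_norm (hh.comp Complex.measurable_arg) hF

end RadMeasure

theorem MeasureTheory.Integrable.max_zero_mul {α : Type*} [MeasurableSpace α] {ν : Measure α}
    {u v : α → ℝ} (huv : Integrable (fun x => v x * u x) ν) (hu : AEStronglyMeasurable u ν)
    (hv : AEStronglyMeasurable v ν) : Integrable (fun x => max (u x) 0 * v x) ν := by
  refine huv.mono ((hu.sup aestronglyMeasurable_const).mul hv) (Eventually.of_forall fun x => ?_)
  rw [norm_mul, norm_mul, mul_comm ‖v x‖]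
  gcongr
  simpa using abs_max_le_max_abs_abs (a := u x) (b := 0)

section RadialDecomposition

variable {ν : Measure ℂ} {k : ℝ → ℝ} {F : ℝ → ℝ} {s : Set ℝ}

theorem MeasureTheory.IntegrableOn.mul_neg_arg {t : Set ℂ}
    (hi : IntegrableOn (fun z : ℂ => F ‖z‖ * k z.arg) t ν) :
    IntegrableOn (fun z : ℂ => F ‖z‖ * -k z.arg) t ν := by
  simpa only [mul_neg, Pi.neg_def] using hi.neg

theorem integrableOn_max_arg_mul (hk : Measurable k) (hs : MeasurableSet s)
    (hF : ContinuousOn F s)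
    (hi : IntegrableOn (fun z : ℂ => F ‖z‖ * k z.arg) ((fun z : ℂ => ‖z‖) ⁻¹' s) ν) :
    IntegrableOn (fun z : ℂ => max (k z.arg) 0 * F ‖z‖) ((fun z : ℂ => ‖z‖) ⁻¹' s) ν :=
  hi.max_zero_mul (hk.comp Complex.measurable_arg).aestronglyMeasurable
    ((hF.comp continuous_norm.continuousOn (mapsTo_preimage _ _)).aestronglyMeasurable
      (measurable_norm hs))

theorem integrableOn_radMeasure_of_integrableOn_mul (hk : Measurable k) (hs : MeasurableSet s)
    (hF : ContinuousOn F s)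
    (hi : IntegrableOn (fun z : ℂ => F ‖z‖ * k z.arg) ((fun z : ℂ => ‖z‖) ⁻¹' s) ν) :
    IntegrableOn F s (radMeasure ν k) :=
  (integrableOn_radMeasure_iff hk hs (hF.aestronglyMeasurable hs)).2
    (integrableOn_max_arg_mul hk hs hF hi)

theorem setIntegral_mul_arg_eq_sub_radMeasure (hk : Measurable k) (hs : MeasurableSet s)
    (hF : ContinuousOn F s)
    (hi : IntegrableOn (fun z : ℂ => F ‖z‖ * k z.arg) ((fun z : ℂ => ‖z‖) ⁻¹' s) ν) :
    ∫ z in (fun z : ℂ => ‖z‖) ⁻¹' s, F ‖z‖ * k z.arg ∂ν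
      = ∫ t in s, F t ∂radMeasure ν k - ∫ t in s, F t ∂radMeasure ν (fun θ => -k θ) := by
  have hk_neg : Measurable fun θ => -k θ := hk.neg
  rw [setIntegral_radMeasure hk hs (hF.aestronglyMeasurable hs),
    setIntegral_radMeasure hk_neg hs (hF.aestronglyMeasurable hs),
    ← integral_sub (integrableOn_max_arg_mul hk hs hF hi)
      (integrableOn_max_arg_mul hk_neg hs hF hi.mul_neg_arg)]
  congr 1 with z
  rw [← sub_mul, max_zero_sub_max_neg_zero_eq_self, mul_comm]

end RadialDecomposition

theorem radial_counting_integral_general (r : ℝ)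
    (f : ℝ → ℝ) (hf : ContinuousOn f (Set.Ioo r 1))
    (k : ℝ → ℝ) (hk : Measurable k)
    (μp μn : MeasureTheory.Measure ℂ)
    (hip : MeasureTheory.IntegrableOn (fun z => f (‖z‖) * k (Complex.arg z))
      (Metric.ball (0 : ℂ) 1 \ Metric.closedBall (0 : ℂ) r) μp)
    (hin : MeasureTheory.IntegrableOn (fun z => f (‖z‖) * k (Complex.arg z))
      (Metric.ball (0 : ℂ) 1 \ Metric.closedBall (0 : ℂ) r) μn) :
    (∫ z in Metric.ball (0 : ℂ) 1 \ Metric.closedBall (0 : ℂ) r,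
        f (‖z‖) * k (Complex.arg z) ∂μp) -
      (∫ z in Metric.ball (0 : ℂ) 1 \ Metric.closedBall (0 : ℂ) r,
        f (‖z‖) * k (Complex.arg z) ∂μn)
    = (∫ t in Set.Ioo r 1, f t
          ∂(radMeasure μp k + radMeasure μn (fun θ => -k θ))) -
        (∫ t in Set.Ioo r 1, f t
          ∂(radMeasure μp (fun θ => -k θ) + radMeasure μn k)) := by
  rw [← preimage_norm_Ioo] at hip hin ⊢
  have hk_neg : Measurable fun θ => -k θ := hk.neg
  have hs : MeasurableSet (Ioo r 1) := measurableSet_Ioo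
  rw [setIntegral_mul_arg_eq_sub_radMeasure hk hs hf hip,
    setIntegral_mul_arg_eq_sub_radMeasure hk hs hf hin, Measure.restrict_add, Measure.restrict_add,
    integral_add_measure (integrableOn_radMeasure_of_integrableOn_mul hk hs hf hip)
      (integrableOn_radMeasure_of_integrableOn_mul hk_neg hs hf hin.mul_neg_arg),
    integral_add_measure (integrableOn_radMeasure_of_integrableOn_mul hk_neg hs hf hip.mul_neg_arg)
      (integrableOn_radMeasure_of_integrableOn_mul hk hs hf hin)]
  ring

/-- Lemma 1: For a continuous `f` on `(r,1) ⊆ (0,1)`, a bounded `2π`-periodic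
Borel `k : ℝ → ℝ` and a Borel charge `μ = μp - μn` on the unit disk `𝔻`,
`∫_{𝔻 ∖ closure D(r)} f(|z|) k(arg z) dμ(z) = ∫_{(r,1)} f(t) dμ^rad(t;k)`.
The Stieltjes measure `dμ^rad(·;k)` of the radial counting function
`t ↦ μ^rad(t;k) = ∫_{|z|≤t} k(arg z) dμ(z)` is the charge
`(radMeasure μp k + radMeasure μn (-k)) - (radMeasure μp (-k) + radMeasure μn k)`,
the pushforward under `z ↦ |z|` of `k(arg z) dμ(z)` (positive and negative parts). -/
theorem radial_counting_integral (r : ℝ) (hr : 0 ≤ r) (hr1 : r < 1)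
    (f : ℝ → ℝ) (hf : ContinuousOn f (Set.Ioo r 1))
    (k : ℝ → ℝ) (hk : Measurable k) (hkper : Function.Periodic k (2 * Real.pi))
    (hkbd : ∃ B : ℝ, ∀ θ, |k θ| ≤ B)
    (μp μn : MeasureTheory.Measure ℂ)
    (hμp : MeasureTheory.IsFiniteMeasure μp) (hμn : MeasureTheory.IsFiniteMeasure μn)
    (hip : MeasureTheory.IntegrableOn (fun z => f (‖z‖) * k (Complex.arg z))
      (Metric.ball (0 : ℂ) 1 \ Metric.closedBall (0 : ℂ) r) μp)
    (hin : MeasureTheory.IntegrableOn (fun z => f (‖z‖) * k (Complex.arg z))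
      (Metric.ball (0 : ℂ) 1 \ Metric.closedBall (0 : ℂ) r) μn) :
    (∫ z in Metric.ball (0 : ℂ) 1 \ Metric.closedBall (0 : ℂ) r,
        f (‖z‖) * k (Complex.arg z) ∂μp) -
      (∫ z in Metric.ball (0 : ℂ) 1 \ Metric.closedBall (0 : ℂ) r,
        f (‖z‖) * k (Complex.arg z) ∂μn)
    = (∫ t in Set.Ioo r 1, f t
          ∂(radMeasure μp k + radMeasure μn (fun θ => -k θ))) -
        (∫ t in Set.Ioo r 1, f t
          ∂(radMeasure μp (fun θ => -k θ) + radMeasure μn k)) :=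
  radial_counting_integral_general r f hf k hk μp μn hip hin
end
end

section
/- Let ρ > 0 and let h: ℝ → ℝ be a 2π-periodic function of class C². Then h is ρ-trigonometrically convex if and only if h''(θ) + ρ² h(θ) ≥ 0 for all θ ∈ ℝ. -/
/-!
On an interval of length less than `π / |ρ|` the equation `y'' + ρ² y = 0` has the positive
solution `w x = cos (ρ (x - m))`, `m` the midpoint. For any `φ` the Wronskian `g = w φ' - w' φ`
satisfies `g' = w (φ'' + ρ² φ)` and `(φ / w)' = g / w²`. Hence if `φ'' + ρ² φ ≥ 0`, then `g` is
monotone, `φ / w` first decreases and then increases, and `φ` vanishing at the ends is `≤ 0`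
in between. With `φ = h - (trigonometric interpolant of h)` this is one direction. Conversely,
if `h'' + ρ² h < 0` near `θ`, the same principle applied to `-h` gives `h ≥` its interpolants
there, so trigonometric convexity forces `h` to be a solution of `y'' + ρ² y = 0` near `θ`,
which contradicts `h'' + ρ² h < 0` at `θ`.
-/

open MeasureTheory Filter Set

noncomputable section

open Real Topology

/-- The solution of `y'' + ρ² y = 0` with `y a = u` and `y b = v`, which plays the role of the
chord in `TrigConvex`. -/
def trigInterp (ρ a b u v x : ℝ) : ℝ :=
  (sin (ρ * (b - x)) * u + sin (ρ * (x - a)) * v) / sin (ρ * (b - a))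

section trigInterp

variable {ρ a b u v : ℝ}

theorem trigInterp_left (hS : sin (ρ * (b - a)) ≠ 0) : trigInterp ρ a b u v a = u := by
  simp [trigInterp, hS]

theorem trigInterp_right (hS : sin (ρ * (b - a)) ≠ 0) : trigInterp ρ a b u v b = v := by
  simp [trigInterp, hS]

theorem trigInterp_neg (x : ℝ) : trigInterp ρ a b (-u) (-v) x = -trigInterp ρ a b u v x := by
  simp only [trigInterp]
  ring

theorem hasDerivAt_trigInterp (x : ℝ) :
    HasDerivAt (trigInterp ρ a b u v)
      (ρ * (cos (ρ * (x - a)) * v - cos (ρ * (b - x)) * u) / sin (ρ * (b - a))) x := by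
  have hl := (((hasDerivAt_id x).const_sub b).const_mul ρ).sin
  have hr := (((hasDerivAt_id x).sub_const a).const_mul ρ).sin
  refine (((hl.mul_const u).add (hr.mul_const v)).div_const (sin (ρ * (b - a)))).congr_deriv ?_
  simp only [id_eq]
  ring

theorem deriv_trigInterp :
    deriv (trigInterp ρ a b u v) =
      fun x => ρ * (cos (ρ * (x - a)) * v - cos (ρ * (b - x)) * u) / sin (ρ * (b - a)) :=
  funext fun x => (hasDerivAt_trigInterp x).deriv

theorem differentiable_trigInterp : Differentiable ℝ (trigInterp ρ a b u v) :=
  fun x => (hasDerivAt_trigInterp x).differentiableAt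

theorem differentiable_deriv_trigInterp : Differentiable ℝ (deriv (trigInterp ρ a b u v)) := by
  rw [deriv_trigInterp]
  fun_prop

theorem deriv_deriv_trigInterp (x : ℝ) :
    deriv (deriv (trigInterp ρ a b u v)) x = -(ρ ^ 2 * trigInterp ρ a b u v x) := by
  have hl := (((hasDerivAt_id x).sub_const a).const_mul ρ).cos
  have hr := (((hasDerivAt_id x).const_sub b).const_mul ρ).cos
  rw [deriv_trigInterp]
  refine ((((hl.mul_const v).sub (hr.mul_const u)).const_mul ρ).div_const _).deriv.trans ?_
  simp only [trigInterp, id_eq]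
  ring

end trigInterp

theorem nonpos_of_hasDerivAt_mul_of_monotoneOn {f g k : ℝ → ℝ} {a b c : ℝ}
    (hf : ContinuousOn f (Icc a b)) (hf' : ∀ x ∈ Ioo a b, HasDerivAt f (g x * k x) x)
    (hg : MonotoneOn g (Ioo a b)) (hk : ∀ x ∈ Ioo a b, 0 < k x) (ha : f a ≤ 0) (hb : f b ≤ 0)
    (hc : c ∈ Icc a b) : f c ≤ 0 := by
  by_contra! hfc
  have hac : a < c := hc.1.lt_of_ne (by rintro rfl; linarith)
  have hcb : c < b := hc.2.lt_of_ne (by rintro rfl; linarith)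
  obtain ⟨s, hs, hslope_s⟩ := exists_hasDerivAt_eq_slope f (fun x => g x * k x) hac
    (hf.mono (Icc_subset_Icc_right hcb.le)) fun x hx => hf' x ⟨hx.1, hx.2.trans hcb⟩
  obtain ⟨t, ht, hslope_t⟩ := exists_hasDerivAt_eq_slope f (fun x => g x * k x) hcb
    (hf.mono (Icc_subset_Icc_left hac.le)) fun x hx => hf' x ⟨hac.trans hx.1, hx.2⟩
  have hs' : s ∈ Ioo a b := ⟨hs.1, hs.2.trans hcb⟩
  have ht' : t ∈ Ioo a b := ⟨hac.trans ht.1, ht.2⟩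
  have hgs : 0 < g s := (mul_pos_iff_of_pos_right (hk s hs')).1 <| by
    rw [hslope_s]; exact div_pos (by linarith) (by linarith)
  have hgt : g t < 0 := neg_of_mul_neg_left (b := k t) (by
    rw [hslope_t]; exact div_neg_of_neg_of_pos (by linarith) (by linarith)) (hk t ht').le
  linarith [hg hs' ht' (hs.2.trans ht.1).le]

theorem nonpos_of_deriv_deriv_add_sq_mul_nonneg {ρ a b c : ℝ} {φ : ℝ → ℝ}
    (hφ : Differentiable ℝ φ) (hφ' : Differentiable ℝ (deriv φ)) (hlen : |ρ| * (b - a) < π)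
    (ha : φ a ≤ 0) (hb : φ b ≤ 0) (hL : ∀ x ∈ Icc a b, 0 ≤ deriv (deriv φ) x + ρ ^ 2 * φ x)
    (hc : c ∈ Icc a b) : φ c ≤ 0 := by
  set w : ℝ → ℝ := fun x => cos (ρ * (x - (a + b) / 2))
  set w' : ℝ → ℝ := fun x => -(ρ * sin (ρ * (x - (a + b) / 2)))
  have hw_pos : ∀ x ∈ Icc a b, 0 < w x := by
    intro x hx
    have : |ρ * (x - (a + b) / 2)| < π / 2 := by
      rw [abs_mul]
      have : |x - (a + b) / 2| ≤ (b - a) / 2 := abs_le.2 ⟨by linarith [hx.1], by linarith [hx.2]⟩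
      nlinarith [abs_nonneg ρ]
    exact cos_pos_of_mem_Ioo (abs_lt.1 this)
  have hw : ∀ x, HasDerivAt w (w' x) x := fun x =>
    ((((hasDerivAt_id x).sub_const _).const_mul ρ).cos).congr_deriv (by simp [w']; ring)
  have hw' : ∀ x, HasDerivAt w' (-(ρ ^ 2 * w x)) x := fun x =>
    ((((hasDerivAt_id x).sub_const _).const_mul ρ).sin.const_mul ρ).neg.congr_deriv
      (by simp [w]; ring)
  set g : ℝ → ℝ := fun x => w x * deriv φ x - w' x * φ x
  have hg : ∀ x, HasDerivAt g (w x * (deriv (deriv φ) x + ρ ^ 2 * φ x)) x := fun x =>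
    (((hw x).mul (hφ' x).hasDerivAt).sub ((hw' x).mul (hφ x).hasDerivAt)).congr_deriv (by ring)
  have hg_mono : MonotoneOn g (Icc a b) := by
    refine monotoneOn_of_hasDerivWithinAt_nonneg (convex_Icc a b)
      (fun x _ => (hg x).continuousAt.continuousWithinAt) (fun x _ => (hg x).hasDerivWithinAt)
      fun x hx => ?_
    rw [interior_Icc] at hx
    exact mul_nonneg (hw_pos x (Ioo_subset_Icc_self hx)).le (hL x (Ioo_subset_Icc_self hx))
  have hquot : ∀ x ∈ Icc a b, HasDerivAt (fun x => φ x / w x) (g x * (w x ^ 2)⁻¹) x :=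
    fun x hx => ((hφ x).hasDerivAt.div (hw x) (hw_pos x hx).ne').congr_deriv (by ring)
  have hquot_nonpos : φ c / w c ≤ 0 :=
    nonpos_of_hasDerivAt_mul_of_monotoneOn (f := fun x => φ x / w x)
      (fun x hx => (hquot x hx).continuousAt.continuousWithinAt)
      (fun x hx => hquot x (Ioo_subset_Icc_self hx)) (hg_mono.mono Ioo_subset_Icc_self)
      (fun x hx => inv_pos.2 (pow_pos (hw_pos x (Ioo_subset_Icc_self hx)) 2))
      (div_nonpos_of_nonpos_of_nonneg ha (hw_pos a ⟨le_rfl, hc.1.trans hc.2⟩).le)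
      (div_nonpos_of_nonpos_of_nonneg hb (hw_pos b ⟨hc.1.trans hc.2, le_rfl⟩).le) hc
  simpa using (div_le_iff₀ (hw_pos c hc)).1 hquot_nonpos

section comparison

variable {ρ a b c : ℝ} {h : ℝ → ℝ}

theorem le_trigInterp_of_deriv_deriv_add_sq_mul_nonneg (hh : Differentiable ℝ h)
    (hh' : Differentiable ℝ (deriv h)) (hρ : ρ ≠ 0) (hab : a < b) (hlen : |ρ| * (b - a) < π)
    (hL : ∀ x ∈ Icc a b, 0 ≤ deriv (deriv h) x + ρ ^ 2 * h x) (hc : c ∈ Icc a b) :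
    h c ≤ trigInterp ρ a b (h a) (h b) c := by
  have hS : sin (ρ * (b - a)) ≠ 0 := by
    have hbound := abs_lt.1 (by rwa [abs_mul, abs_of_pos (sub_pos.2 hab)] : |ρ * (b - a)| < π)
    rw [Ne, sin_eq_zero_iff_of_lt_of_lt hbound.1 hbound.2]
    exact mul_ne_zero hρ (sub_pos.2 hab).ne'
  set T := trigInterp ρ a b (h a) (h b)
  have hderiv : deriv (h - T) = deriv h - deriv T :=
    funext fun x => deriv_sub (hh x) (differentiable_trigInterp x)
  have hL' : ∀ x ∈ Icc a b, 0 ≤ deriv (deriv (h - T)) x + ρ ^ 2 * (h - T) x := fun x hx => by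
    rw [hderiv, deriv_sub (hh' x) (differentiable_deriv_trigInterp x), deriv_deriv_trigInterp,
      Pi.sub_apply]
    linarith [hL x hx]
  have := nonpos_of_deriv_deriv_add_sq_mul_nonneg (hh.sub differentiable_trigInterp)
    (hderiv ▸ hh'.sub differentiable_deriv_trigInterp) hlen
    (by simp [trigInterp_left hS]) (by simp [trigInterp_right hS]) hL' hc
  exact sub_nonpos.1 this

theorem trigInterp_le_of_deriv_deriv_add_sq_mul_nonpos (hh : Differentiable ℝ h)
    (hh' : Differentiable ℝ (deriv h)) (hρ : ρ ≠ 0) (hab : a < b) (hlen : |ρ| * (b - a) < π)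
    (hL : ∀ x ∈ Icc a b, deriv (deriv h) x + ρ ^ 2 * h x ≤ 0) (hc : c ∈ Icc a b) :
    trigInterp ρ a b (h a) (h b) c ≤ h c := by
  have := le_trigInterp_of_deriv_deriv_add_sq_mul_nonneg (h := -h) hh.neg
    (by rw [deriv.neg']; exact hh'.neg) hρ hab hlen
    (fun x hx => by simp only [deriv.neg', deriv.fun_neg, Pi.neg_apply]; linarith [hL x hx]) hc
  simp only [Pi.neg_apply, trigInterp_neg] at this
  linarith

end comparison

theorem TrigConvex.deriv_deriv_add_sq_mul_nonneg {ρ : ℝ} {h : ℝ → ℝ} (hconv : TrigConvex ρ h)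
    (hρ : 0 < ρ) (hh : ContDiff ℝ 2 h) (θ : ℝ) : 0 ≤ deriv (deriv h) θ + ρ ^ 2 * h θ := by
  have hd : Differentiable ℝ h := hh.differentiable two_ne_zero
  have hd' : Differentiable ℝ (deriv h) := hh.differentiable_deriv_two
  have hcont : Continuous fun x => deriv (deriv h) x + ρ ^ 2 * h x :=
    (hh.deriv' (n := 1)).continuous_deriv_one.add (continuous_const.mul hd.continuous)
  by_contra! hneg
  have hshort : Ioo (θ - π / (2 * ρ)) (θ + π / (2 * ρ)) ∈ 𝓝 θ := by
    have : 0 < π / (2 * ρ) := by positivity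
    exact Ioo_mem_nhds (by linarith) (by linarith)
  obtain ⟨a, b, -, hnhds, hsub⟩ := exists_Icc_mem_subset_of_mem_nhds
    (inter_mem (hcont.continuousAt.eventually_lt continuousAt_const hneg) hshort)
  have hθ : θ ∈ Ioo a b := by
    rw [← interior_Icc]
    exact mem_interior_iff_mem_nhds.2 hnhds
  have hab : a < b := hθ.1.trans hθ.2
  have hlen : b - a < π / ρ := by
    have ha := (hsub ⟨le_rfl, hab.le⟩).2.1
    have hb := (hsub ⟨hab.le, le_rfl⟩).2.2
    have : π / ρ = 2 * (π / (2 * ρ)) := by field_simp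
    linarith
  set T := trigInterp ρ a b (h a) (h b)
  have hle : ∀ x ∈ Ioo a b, h x ≤ T x := fun x hx =>
    hconv.2 hρ.ne' a b x (sub_pos.2 hab) hlen hx.1 hx.2
  have hge : ∀ x ∈ Icc a b, T x ≤ h x := fun x hx =>
    trigInterp_le_of_deriv_deriv_add_sq_mul_nonpos hd hd' hρ.ne' hab
      (by rwa [abs_of_pos hρ, ← lt_div_iff₀' hρ]) (fun y hy => (hsub hy).1.le) hx
  have heq : h =ᶠ[𝓝 θ] T := eventually_of_mem (Ioo_mem_nhds hθ.1 hθ.2) fun x hx =>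
    (hle x hx).antisymm (hge x (Ioo_subset_Icc_self hx))
  have hsolves : deriv (deriv h) θ + ρ ^ 2 * h θ = 0 := by
    rw [heq.deriv.deriv_eq, deriv_deriv_trigInterp, heq.eq_of_nhds]
    ring
  exact hneg.ne hsolves

theorem trigConvex_of_deriv_deriv_add_sq_mul_nonneg {ρ : ℝ} {h : ℝ → ℝ} (hρ : 0 < ρ)
    (hh : Differentiable ℝ h) (hh' : Differentiable ℝ (deriv h))
    (hL : ∀ θ, 0 ≤ deriv (deriv h) θ + ρ ^ 2 * h θ) : TrigConvex ρ h :=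
  ⟨fun h0 => absurd h0 hρ.ne', fun _ _ _ _ hpos hlen h₁ h₂ =>
    le_trigInterp_of_deriv_deriv_add_sq_mul_nonneg hh hh' hρ.ne' (sub_pos.1 hpos)
      (by rwa [abs_of_pos hρ, ← lt_div_iff₀' hρ]) (fun x _ => hL x) ⟨h₁.le, h₂.le⟩⟩

theorem trigConvex_iff_c2_general (ρ : ℝ) (hρ : 0 < ρ) (h : ℝ → ℝ) (hC2 : ContDiff ℝ 2 h) :
    TrigConvex ρ h ↔ ∀ θ : ℝ, 0 ≤ deriv (deriv h) θ + ρ ^ 2 * h θ :=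
  ⟨fun hconv => hconv.deriv_deriv_add_sq_mul_nonneg hρ hC2,
    trigConvex_of_deriv_deriv_add_sq_mul_nonneg hρ (hC2.differentiable two_ne_zero)
      hC2.differentiable_deriv_two⟩

/-- For `ρ > 0` and a `2π`-periodic `C²` function `h : ℝ → ℝ`,
`h` is `ρ`-trigonometrically convex iff `h''(θ) + ρ² h(θ) ≥ 0` for all `θ`. -/
theorem trigConvex_iff_c2 (ρ : ℝ) (hρ : 0 < ρ) (h : ℝ → ℝ)
    (hper : Function.Periodic h (2 * Real.pi)) (hC2 : ContDiff ℝ 2 h) :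
    TrigConvex ρ h ↔ ∀ θ : ℝ, 0 ≤ deriv (deriv h) θ + ρ ^ 2 * h θ :=
  trigConvex_iff_c2_general ρ hρ h hC2
end
end

section
/- If 0 ≤ ρ ≤ ρ' and h: ℝ → ℝ is a nonnegative 2π-periodic ρ-trigonometrically convex function, then h is also ρ'-trigonometrically convex; that is, the class of nonnegative 2π-periodic ρ-trigonometrically convex functions is contained in the class of nonnegative 2π-periodic ρ'-trigonometrically convex functions. -/
/-! For `0 < ρ ≤ ρ'`, the weights `sin (ρ (θ₂ - θ)) / sin (ρ (θ₂ - θ₁))` and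
`sin (ρ (θ - θ₁)) / sin (ρ (θ₂ - θ₁))` on the right of the `ρ`-inequality increase with `ρ`:
with `q = (θ₂ - θ) / (θ₂ - θ₁) ∈ [0, 1]` this is the monotonicity of `t ↦ sin (q t) / sin t`
on `(0, π)`. Since `h ≥ 0`, the `ρ`-bound for `h θ` is then below the `ρ'`-bound.
For `ρ = 0` the function is a nonnegative constant `c`, and `c ≤ c (sin a + sin b) / sin (a + b)`
is subadditivity of `sin` on arguments with nonnegative sine. -/

open MeasureTheory Filter Set

noncomputable section

open Real

/-- The right-hand side of the `TrigConvex` inequality, with `u = h θ₁` and `v = h θ₂`. -/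
def sinInterp (ρ θ₁ θ₂ θ u v : ℝ) : ℝ :=
  (sin (ρ * (θ₂ - θ)) * u + sin (ρ * (θ - θ₁)) * v) / sin (ρ * (θ₂ - θ₁))

namespace Real

lemma sin_add_le_sin_add_sin {x y : ℝ} (hx : 0 ≤ sin x) (hy : 0 ≤ sin y) :
    sin (x + y) ≤ sin x + sin y := by
  rw [sin_add]
  nlinarith [cos_le_one x, cos_le_one y]

lemma sin_mul_mul_cos_le {q t : ℝ} (hq0 : 0 ≤ q) (hq1 : q ≤ 1) (ht0 : 0 ≤ t) (htπ : t ≤ π) :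
    sin (q * t) * cos t ≤ q * cos (q * t) * sin t := by
  let N : ℝ → ℝ := fun s ↦ q * cos (q * s) * sin s - sin (q * s) * cos s
  have hN' : ∀ s, HasDerivAt N ((1 - q ^ 2) * (sin (q * s) * sin s)) s := fun s ↦ by
    have hqs : HasDerivAt (q * ·) q s := by simpa using (hasDerivAt_id s).const_mul q
    exact ((((hqs.cos).const_mul q).mul (hasDerivAt_sin s)).sub
      ((hqs.sin).mul (hasDerivAt_cos s))).congr_deriv (by ring)
  have hmono : MonotoneOn N (Icc 0 π) := by
    refine monotoneOn_of_hasDerivWithinAt_nonneg (convex_Icc 0 π)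
      (fun s _ ↦ (hN' s).continuousAt.continuousWithinAt)
      (fun s _ ↦ (hN' s).hasDerivWithinAt) fun s hs ↦ ?_
    rw [interior_Icc] at hs
    have hqs : q * s ≤ π := by nlinarith [hs.1, hs.2]
    have hsin := mul_nonneg (sin_nonneg_of_nonneg_of_le_pi (mul_nonneg hq0 hs.1.le) hqs)
      (sin_nonneg_of_nonneg_of_le_pi hs.1.le hs.2.le)
    exact mul_nonneg (by nlinarith) hsin
  have := hmono ⟨le_rfl, pi_pos.le⟩ ⟨ht0, htπ⟩ ht0
  simp only [N, mul_zero, sin_zero, cos_zero] at this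
  linarith

lemma monotoneOn_sin_mul_div_sin {q : ℝ} (hq0 : 0 ≤ q) (hq1 : q ≤ 1) :
    MonotoneOn (fun t ↦ sin (q * t) / sin t) (Ioo 0 π) := by
  have hsin : ∀ t ∈ Ioo 0 π, sin t ≠ 0 := fun t ht ↦ (sin_pos_of_pos_of_lt_pi ht.1 ht.2).ne'
  refine monotoneOn_of_hasDerivWithinAt_nonneg (convex_Ioo 0 π)
    (f' := fun t ↦ (cos (q * t) * q * sin t - sin (q * t) * cos t) / sin t ^ 2)
    (fun t ht ↦ ((continuous_sin.comp (continuous_const_mul q)).continuousAt.div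
      continuous_sin.continuousAt (hsin t ht)).continuousWithinAt) (fun t ht ↦ ?_) fun t ht ↦ ?_
  all_goals rw [interior_Ioo] at ht
  · have hqt : HasDerivAt (q * ·) q t := by simpa using (hasDerivAt_id t).const_mul q
    exact (hqt.sin.div (hasDerivAt_sin t) (hsin t ht)).hasDerivWithinAt
  · have := sin_mul_mul_cos_le hq0 hq1 ht.1.le ht.2.le
    exact div_nonneg (by linarith) (sq_nonneg _)

lemma sin_mul_div_sin_mul_le {ρ ρ' a c : ℝ} (hρ : 0 < ρ) (hρρ' : ρ ≤ ρ') (ha : 0 ≤ a)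
    (hac : a ≤ c) (hc : 0 < c) (hπ : ρ' * c < π) :
    sin (ρ * a) / sin (ρ * c) ≤ sin (ρ' * a) / sin (ρ' * c) := by
  have hq : ∀ r, a / c * (r * c) = r * a := fun r ↦ by field_simp
  have hρc : ρ * c ≤ ρ' * c := by gcongr
  have key := monotoneOn_sin_mul_div_sin (div_nonneg ha hc.le) ((div_le_one hc).mpr hac)
    ⟨by positivity, hρc.trans_lt hπ⟩ ⟨by nlinarith, hπ⟩ hρc
  simpa only [hq] using key

end Real

section sinInterp

variable {θ₁ θ₂ θ : ℝ}

lemma sinInterp_eq (ρ u v : ℝ) : sinInterp ρ θ₁ θ₂ θ u v =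
    sin (ρ * (θ₂ - θ)) / sin (ρ * (θ₂ - θ₁)) * u +
      sin (ρ * (θ - θ₁)) / sin (ρ * (θ₂ - θ₁)) * v := by
  rw [sinInterp, add_div, mul_div_right_comm, mul_div_right_comm (sin _) v]

lemma sinInterp_le_sinInterp {ρ ρ' u v : ℝ} (hρ : 0 < ρ) (hρρ' : ρ ≤ ρ') (hu : 0 ≤ u)
    (hv : 0 ≤ v) (h1 : θ₁ ≤ θ) (h2 : θ ≤ θ₂) (h12 : θ₁ < θ₂) (hπ : ρ' * (θ₂ - θ₁) < π) :
    sinInterp ρ θ₁ θ₂ θ u v ≤ sinInterp ρ' θ₁ θ₂ θ u v := by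
  rw [sinInterp_eq, sinInterp_eq]
  have hθ : 0 < θ₂ - θ₁ := sub_pos.mpr h12
  exact add_le_add
    (mul_le_mul_of_nonneg_right
      (sin_mul_div_sin_mul_le hρ hρρ' (by linarith) (by linarith) hθ hπ) hu)
    (mul_le_mul_of_nonneg_right
      (sin_mul_div_sin_mul_le hρ hρρ' (by linarith) (by linarith) hθ hπ) hv)

lemma le_sinInterp_self {ρ c : ℝ} (hρ : 0 < ρ) (hc : 0 ≤ c) (h1 : θ₁ ≤ θ) (h2 : θ ≤ θ₂)
    (h12 : θ₁ < θ₂) (hπ : ρ * (θ₂ - θ₁) < π) : c ≤ sinInterp ρ θ₁ θ₂ θ c c := by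
  have hsin : ∀ {x}, 0 ≤ x → x ≤ θ₂ - θ₁ → 0 ≤ sin (ρ * x) := fun hx0 hx ↦
    sin_nonneg_of_nonneg_of_le_pi (mul_nonneg hρ.le hx0)
      ((mul_le_mul_of_nonneg_left hx hρ.le).trans hπ.le)
  have hsinC : 0 < sin (ρ * (θ₂ - θ₁)) := sin_pos_of_pos_of_lt_pi (by nlinarith) hπ
  have hA := hsin (x := θ₂ - θ) (by linarith) (by linarith)
  have hB := hsin (x := θ - θ₁) (by linarith) (by linarith)
  have hsub : sin (ρ * (θ₂ - θ₁)) ≤ sin (ρ * (θ₂ - θ)) + sin (ρ * (θ - θ₁)) := by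
    rw [show ρ * (θ₂ - θ₁) = ρ * (θ₂ - θ) + ρ * (θ - θ₁) by ring]
    exact sin_add_le_sin_add_sin hA hB
  rw [sinInterp, le_div_iff₀ hsinC]
  nlinarith

end sinInterp

theorem trigConvex_mono_general (ρ ρ' : ℝ) (hρ : 0 ≤ ρ) (hρρ' : ρ ≤ ρ') (h : ℝ → ℝ)
    (hpos : ∀ θ, 0 ≤ h θ)
    (htc : TrigConvex ρ h) :
    TrigConvex ρ' h := by
  refine ⟨fun hρ'0 ↦ htc.1 (by linarith), fun hρ'0 θ₁ θ₂ θ hθ hπ h1 h2 ↦ ?_⟩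
  have hρ' : 0 < ρ' := lt_of_le_of_ne (hρ.trans hρρ') (Ne.symm hρ'0)
  have hπ' : ρ' * (θ₂ - θ₁) < π := by rwa [lt_div_iff₀' hρ'] at hπ
  have h12 : θ₁ < θ₂ := sub_pos.mp hθ
  change h θ ≤ sinInterp ρ' θ₁ θ₂ θ (h θ₁) (h θ₂)
  rcases hρ.eq_or_lt with rfl | hρ
  · obtain ⟨c, hc⟩ := htc.1 rfl
    simpa only [hc] using le_sinInterp_self hρ' (hc θ ▸ hpos θ) h1.le h2.le h12 hπ'
  · have hπρ : θ₂ - θ₁ < π / ρ := hπ.trans_le (div_le_div_of_nonneg_left pi_pos.le hρ hρρ')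
    exact (htc.2 hρ.ne' θ₁ θ₂ θ hθ hπρ h1 h2).trans
      (sinInterp_le_sinInterp hρ hρρ' (hpos θ₁) (hpos θ₂) h1.le h2.le h12 hπ')

/-- If `0 ≤ ρ ≤ ρ'` and `h` is a nonnegative `2π`-periodic
`ρ`-trigonometrically convex function, then `h` is also `ρ'`-trigonometrically convex. -/
theorem trigConvex_mono (ρ ρ' : ℝ) (hρ : 0 ≤ ρ) (hρρ' : ρ ≤ ρ') (h : ℝ → ℝ)
    (hper : Function.Periodic h (2 * Real.pi)) (hpos : ∀ θ, 0 ≤ h θ)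
    (htc : TrigConvex ρ h) :
    TrigConvex ρ' h :=
  trigConvex_mono_general ρ ρ' hρ hρρ' h hpos htc
end
end

section
/- Let ρ > 0. The 2π-periodic continuation of the function h defined on (−π, π] by h(θ) := cos(ρθ) if |θ| < π/(2ρ) and h(θ) := 0 if |θ| ≥ π/(2ρ) is a nonnegative 2π-periodic ρ-trigonometrically convex function. -/
/-! A shifted cosine `x ↦ cos (ρ (x - a))` turns the `ρ`-trigonometric convexity inequality into an
equality, so it plays the role of a supporting line. Where `h θ > 0`, the shifted cosine that
agrees with `h` near `θ` stays below `h` on the whole window `|x - θ| < π/ρ` (it is nonpositive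
wherever `h` is cut off to `0`); where `h θ = 0` the inequality follows from `h ≥ 0`. -/

open MeasureTheory Filter Set

noncomputable section

open Real

theorem sin_sub_mul_cos_eq (x y z : ℝ) :
    sin (z - x) * cos y = sin (z - y) * cos x + sin (y - x) * cos z := by
  simp only [sin_sub]
  ring

theorem sin_mul_cos_le_of_cos_le {ρ a θ₁ θ θ₂ u₁ u₂ : ℝ} (hρ : 0 < ρ) (h₁ : θ₁ < θ) (h₂ : θ < θ₂)
    (hπ : ρ * (θ₂ - θ₁) < π) (hu₁ : cos (ρ * (θ₁ - a)) ≤ u₁) (hu₂ : cos (ρ * (θ₂ - a)) ≤ u₂) :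
    sin (ρ * (θ₂ - θ₁)) * cos (ρ * (θ - a)) ≤
      sin (ρ * (θ₂ - θ)) * u₁ + sin (ρ * (θ - θ₁)) * u₂ := by
  have hs₁ : 0 ≤ sin (ρ * (θ₂ - θ)) :=
    sin_nonneg_of_nonneg_of_le_pi (by nlinarith) (by nlinarith)
  have hs₂ : 0 ≤ sin (ρ * (θ - θ₁)) :=
    sin_nonneg_of_nonneg_of_le_pi (by nlinarith) (by nlinarith)
  calc sin (ρ * (θ₂ - θ₁)) * cos (ρ * (θ - a))
      = sin (ρ * (θ₂ - θ)) * cos (ρ * (θ₁ - a)) + sin (ρ * (θ - θ₁)) * cos (ρ * (θ₂ - a)) := by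
        convert sin_sub_mul_cos_eq (ρ * (θ₁ - a)) (ρ * (θ - a)) (ρ * (θ₂ - a)) using 4 <;> ring
    _ ≤ sin (ρ * (θ₂ - θ)) * u₁ + sin (ρ * (θ - θ₁)) * u₂ := by gcongr

theorem cos_mul_nonneg_of_abs_lt {ρ θ : ℝ} (hρ : 0 < ρ) (hθ : |θ| < π / (2 * ρ)) :
    0 ≤ cos (ρ * θ) := by
  rw [← cos_abs, abs_mul, abs_of_pos hρ]
  refine cos_nonneg_of_neg_pi_div_two_le_of_le (by nlinarith [abs_nonneg θ, pi_pos]) ?_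
  rw [lt_div_iff₀ (by positivity)] at hθ
  linarith

theorem abs_toIocMod_neg_pi_le (x : ℝ) : |toIocMod two_pi_pos (-π) x| ≤ |x| := by
  have hmem := toIocMod_mem_Ioc two_pi_pos (-π) x
  by_cases hx : x ∈ Set.Ioc (-π) (-π + 2 * π)
  · rw [(toIocMod_eq_self two_pi_pos).2 hx]
  · rw [Set.mem_Ioc, not_and_or, not_lt, not_le] at hx
    rw [abs_le]
    constructor <;> rcases hx with hx | hx <;> cases abs_cases x <;> linarith [hmem.1, hmem.2]

section TruncatedCos

variable {ρ : ℝ} {h : ℝ → ℝ}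

theorem apply_eq_ite_toIocMod (hper : Function.Periodic h (2 * π))
    (hdef : ∀ θ ∈ Set.Ioc (-π) π, h θ = if |θ| < π / (2 * ρ) then cos (ρ * θ) else 0) (x : ℝ) :
    h x = if |toIocMod two_pi_pos (-π) x| < π / (2 * ρ) then
      cos (ρ * toIocMod two_pi_pos (-π) x) else 0 := by
  rw [← hdef _ (by simpa [two_mul] using toIocMod_mem_Ioc two_pi_pos (-π) x),
    ← self_sub_toIocDiv_zsmul, hper.sub_zsmul_eq]

theorem nonneg_of_periodic_truncated_cos (hρ : 0 < ρ) (hper : Function.Periodic h (2 * π))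
    (hdef : ∀ θ ∈ Set.Ioc (-π) π, h θ = if |θ| < π / (2 * ρ) then cos (ρ * θ) else 0) (x : ℝ) :
    0 ≤ h x := by
  rw [apply_eq_ite_toIocMod hper hdef]
  split_ifs with hx
  · exact cos_mul_nonneg_of_abs_lt hρ hx
  · exact le_rfl

theorem cos_mul_le_of_periodic_truncated_cos (hρ : 0 < ρ) (hper : Function.Periodic h (2 * π))
    (hdef : ∀ θ ∈ Set.Ioc (-π) π, h θ = if |θ| < π / (2 * ρ) then cos (ρ * θ) else 0) {x : ℝ}
    (hx : ρ * |x| < 3 * π / 2) :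
    cos (ρ * x) ≤ h x := by
  by_cases hsmall : |x| < π / (2 * ρ)
  · have hrx := abs_toIocMod_neg_pi_le x
    rw [apply_eq_ite_toIocMod hper hdef, if_pos (hrx.trans_lt hsmall)]
    set r := toIocMod two_pi_pos (-π) x
    rw [← cos_abs (ρ * r), ← cos_abs (ρ * x), abs_mul, abs_mul, abs_of_pos hρ]
    rw [lt_div_iff₀ (by positivity)] at hsmall
    exact cos_le_cos_of_nonneg_of_le_pi (by positivity) (by nlinarith)
      (mul_le_mul_of_nonneg_left hrx hρ.le)
  · rw [lt_div_iff₀ (by positivity), not_lt] at hsmall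
    refine le_trans ?_ (nonneg_of_periodic_truncated_cos hρ hper hdef x)
    rw [← cos_abs, abs_mul, abs_of_pos hρ]
    exact cos_nonpos_of_pi_div_two_le_of_le (by linarith) (by linarith)

theorem eq_zero_or_exists_cos_support (hρ : 0 < ρ) (hper : Function.Periodic h (2 * π))
    (hdef : ∀ θ ∈ Set.Ioc (-π) π, h θ = if |θ| < π / (2 * ρ) then cos (ρ * θ) else 0) (θ : ℝ) :
    h θ = 0 ∨ ∃ a, h θ = cos (ρ * (θ - a)) ∧ ∀ x, |x - θ| < π / ρ → cos (ρ * (x - a)) ≤ h x := by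
  set r := toIocMod two_pi_pos (-π) θ
  set a := toIocDiv two_pi_pos (-π) θ • (2 * π)
  have hθa : θ - a = r := self_sub_toIocDiv_zsmul two_pi_pos (-π) θ
  rw [apply_eq_ite_toIocMod hper hdef]
  split_ifs with hr
  · refine Or.inr ⟨a, by rw [hθa], fun x hx => ?_⟩
    rw [← hper.sub_zsmul_eq (toIocDiv two_pi_pos (-π) θ)]
    refine cos_mul_le_of_periodic_truncated_cos hρ hper hdef ?_
    rw [lt_div_iff₀ (by positivity)] at hr
    rw [lt_div_iff₀ hρ] at hx
    calc ρ * |x - a| ≤ ρ * |x - θ| + ρ * |r| := by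
          rw [← mul_add, ← hθa]
          exact mul_le_mul_of_nonneg_left (by simpa using abs_add_le (x - θ) (θ - a)) hρ.le
      _ < 3 * π / 2 := by nlinarith [abs_nonneg (x - θ)]
  · exact Or.inl rfl

end TruncatedCos

/-- For `ρ > 0`, the `2π`-periodic continuation of
`θ ↦ cos (ρθ)` for `|θ| < π/(2ρ)`, `θ ↦ 0` for `|θ| ≥ π/(2ρ)` (on `(-π, π]`)
is a nonnegative `2π`-periodic `ρ`-trigonometrically convex function. -/
theorem trigConvex_truncated_cos (ρ : ℝ) (hρ : 0 < ρ) (h : ℝ → ℝ)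
    (hper : Function.Periodic h (2 * Real.pi))
    (hdef : ∀ θ ∈ Set.Ioc (-Real.pi) Real.pi,
      h θ = if |θ| < Real.pi / (2 * ρ) then Real.cos (ρ * θ) else 0) :
    (∀ θ, 0 ≤ h θ) ∧ TrigConvex ρ h := by
  have hnonneg := nonneg_of_periodic_truncated_cos hρ hper hdef
  refine ⟨hnonneg, fun hρ0 => absurd hρ0 hρ.ne', fun _ θ₁ θ₂ θ _ hwidth h₁ h₂ => ?_⟩
  rw [lt_div_iff₀ hρ, mul_comm] at hwidth
  rw [le_div_iff₀ (sin_pos_of_pos_of_lt_pi (by nlinarith) hwidth)]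
  rcases eq_zero_or_exists_cos_support hρ hper hdef θ with hzero | ⟨a, hcos, hsupp⟩
  · have hs₁ : 0 ≤ sin (ρ * (θ₂ - θ)) := sin_nonneg_of_nonneg_of_le_pi (by nlinarith) (by nlinarith)
    have hs₂ : 0 ≤ sin (ρ * (θ - θ₁)) := sin_nonneg_of_nonneg_of_le_pi (by nlinarith) (by nlinarith)
    rw [hzero, zero_mul]
    exact add_nonneg (mul_nonneg hs₁ (hnonneg θ₁)) (mul_nonneg hs₂ (hnonneg θ₂))
  · have hwin : ∀ x, θ₁ ≤ x → x ≤ θ₂ → |x - θ| < π / ρ := fun x hx₁ hx₂ => by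
      rw [abs_sub_lt_iff, lt_div_iff₀ hρ, lt_div_iff₀ hρ]
      constructor <;> nlinarith
    rw [hcos, mul_comm]
    exact sin_mul_cos_le_of_cos_le hρ h₁ h₂ hwidth (hsupp θ₁ (hwin θ₁ le_rfl (h₁.trans h₂).le))
      (hsupp θ₂ (hwin θ₂ (h₁.trans h₂).le le_rfl))
end
end

section
/- Let ρ ≥ 0 and let h be a nonnegative 2π-periodic ρ-trigonometrically convex function. Then there exists a sequence (h_n)_{n∈ℕ} of nonnegative 2π-periodic ρ-trigonometrically convex functions of class C² that decreases pointwise to h as n → ∞. -/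
/-!
For `ρ > 0`, the three-point inequality applied on windows of fixed length squeezes `h` near
each point between combinations of sines, so `h` is continuous, hence uniformly continuous by
periodicity. Mollifying `h` with a nonnegative bump keeps it periodic, nonnegative and
trigonometrically convex (the three-point inequality is linear in `h` and translation
invariant) and gives smooth `g n` with `|g n - h| ≤ 2⁻ⁿ`. Because `sin (a + b) ≤ sin a + sin b`
on the relevant range, adding a nonnegative constant preserves trigonometric convexity, and
`g n + 3 · 2⁻ⁿ` decreases to `h`.
-/

open MeasureTheory Filter Set

noncomputable section

open Function Real ContinuousLinearMap
open scoped Convolution ContDiff Topology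

theorem Function.Periodic.uniformContinuous_of_continuous {α : Type*} [UniformSpace α]
    {f : ℝ → α} {c : ℝ} (hp : Periodic f c) (hc : 0 < c) (hf : Continuous f) :
    UniformContinuous f := by
  have : Fact (0 < c) := ⟨hc⟩
  have hmk : UniformContinuous ((↑) : ℝ → AddCircle c) :=
    uniformContinuous_addMonoidHom_of_continuous (f := QuotientAddGroup.mk' _)
      (AddCircle.continuous_mk' c)
  have hlift : Continuous hp.lift := continuous_quot_lift _ hf
  exact (CompactSpace.uniformContinuous_of_continuous hlift).comp hmk

theorem Function.Periodic.convolution {G E E' F 𝕜 : Type*} [NontriviallyNormedField 𝕜]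
    [NormedAddCommGroup E] [NormedAddCommGroup E'] [NormedAddCommGroup F]
    [NormedSpace 𝕜 E] [NormedSpace 𝕜 E'] [NormedSpace ℝ F] [NormedSpace 𝕜 F]
    [AddCommGroup G] [MeasurableSpace G] {f : G → E} {g : G → E'} {c : G}
    (L : E →L[𝕜] E' →L[𝕜] F) (μ : Measure G) (hg : Periodic g c) :
    Periodic (f ⋆[L, μ] g) c := by
  intro x
  simp_rw [convolution_def, add_sub_right_comm, hg _]

theorem Real.sin_add_le_sin_add_sin_s19 {a b : ℝ} (ha : 0 ≤ sin a) (hb : 0 ≤ sin b) :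
    sin (a + b) ≤ sin a + sin b := by
  rw [sin_add]
  nlinarith [cos_le_one a, cos_le_one b]

theorem UniformContinuous.exists_dist_normed_convolution_le {E F : Type*}
    [NormedAddCommGroup E] [NormedSpace ℝ E] [FiniteDimensional ℝ E] [MeasurableSpace E]
    [BorelSpace E] [NormedAddCommGroup F] [NormedSpace ℝ F] [CompleteSpace F]
    {μ : Measure E} [μ.IsAddHaarMeasure] {f : E → F} (hf : UniformContinuous f) {ε : ℝ}
    (hε : 0 < ε) :
    ∃ φ : ContDiffBump (0 : E), ∀ x, dist ((φ.normed μ ⋆[lsmul ℝ ℝ, μ] f) x) (f x) ≤ ε := by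
  obtain ⟨δ, hδ, hfδ⟩ := Metric.uniformContinuous_iff.mp hf ε hε
  refine ⟨⟨δ / 2, δ, half_pos hδ, half_lt_self hδ⟩, fun x => ?_⟩
  exact ContDiffBump.dist_normed_convolution_le hf.continuous.aestronglyMeasurable
    fun y hy => (hfδ hy).le

theorem trigConvex_iff_mul_sin_le {ρ : ℝ} {h : ℝ → ℝ} :
    TrigConvex ρ h ↔ (ρ = 0 → ∃ c : ℝ, ∀ θ, h θ = c) ∧
      (0 < ρ → ∀ θ₁ θ₂ θ : ℝ, ρ * (θ₂ - θ₁) < π → θ₁ < θ → θ < θ₂ →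
        sin (ρ * (θ₂ - θ₁)) * h θ ≤ sin (ρ * (θ₂ - θ)) * h θ₁ + sin (ρ * (θ - θ₁)) * h θ₂) := by
  refine and_congr_right fun _ =>
    ⟨fun H hρ θ₁ θ₂ θ hπ h₁ h₂ => ?_, fun H hρ θ₁ θ₂ θ hd hdπ h₁ h₂ => ?_⟩
  · have hS : 0 < sin (ρ * (θ₂ - θ₁)) := sin_pos_of_pos_of_lt_pi (by nlinarith) hπ
    have := H hρ.ne' θ₁ θ₂ θ (by linarith) ((lt_div_iff₀' hρ).2 hπ) h₁ h₂
    rwa [le_div_iff₀ hS, mul_comm] at this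
  · have hρ' : 0 < ρ := (div_pos_iff_of_pos_left pi_pos).1 (hd.trans hdπ)
    have hπ : ρ * (θ₂ - θ₁) < π := (lt_div_iff₀' hρ').1 hdπ
    rw [le_div_iff₀ (sin_pos_of_pos_of_lt_pi (by nlinarith) hπ), mul_comm]
    exact H hρ' θ₁ θ₂ θ hπ h₁ h₂

namespace TrigConvex

variable {ρ : ℝ} {h : ℝ → ℝ}

theorem add_const (htc : TrigConvex ρ h) {c : ℝ} (hc : 0 ≤ c) :
    TrigConvex ρ (fun θ => h θ + c) := by
  rw [trigConvex_iff_mul_sin_le] at htc ⊢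
  refine ⟨fun hρ => ?_, fun hρ θ₁ θ₂ θ hπ h₁ h₂ => ?_⟩
  · obtain ⟨a, ha⟩ := htc.1 hρ
    exact ⟨a + c, fun θ => by rw [ha]⟩
  · have hsin : sin (ρ * (θ₂ - θ₁)) ≤ sin (ρ * (θ₂ - θ)) + sin (ρ * (θ - θ₁)) := by
      rw [show ρ * (θ₂ - θ₁) = ρ * (θ₂ - θ) + ρ * (θ - θ₁) by ring]
      exact sin_add_le_sin_add_sin_s19 (sin_nonneg_of_nonneg_of_le_pi (by nlinarith) (by nlinarith))
        (sin_nonneg_of_nonneg_of_le_pi (by nlinarith) (by nlinarith))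
    nlinarith [htc.2 hρ θ₁ θ₂ θ hπ h₁ h₂, mul_le_mul_of_nonneg_right hsin hc]

theorem const_mul (htc : TrigConvex ρ h) {a : ℝ} (ha : 0 ≤ a) :
    TrigConvex ρ (fun θ => a * h θ) := by
  rw [trigConvex_iff_mul_sin_le] at htc ⊢
  refine ⟨fun hρ => ?_, fun hρ θ₁ θ₂ θ hπ h₁ h₂ => ?_⟩
  · obtain ⟨c, hc⟩ := htc.1 hρ
    exact ⟨a * c, fun θ => by rw [hc]⟩
  · nlinarith [mul_le_mul_of_nonneg_left (htc.2 hρ θ₁ θ₂ θ hπ h₁ h₂) ha]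

theorem comp_sub_const (htc : TrigConvex ρ h) (t : ℝ) : TrigConvex ρ (fun θ => h (θ - t)) := by
  rw [trigConvex_iff_mul_sin_le] at htc ⊢
  refine ⟨fun hρ => ?_, fun hρ θ₁ θ₂ θ hπ h₁ h₂ => ?_⟩
  · obtain ⟨c, hc⟩ := htc.1 hρ
    exact ⟨c, fun θ => hc _⟩
  · have := htc.2 hρ (θ₁ - t) (θ₂ - t) (θ - t) (by rwa [sub_sub_sub_cancel_right])
      (by linarith) (by linarith)
    simpa only [sub_sub_sub_cancel_right] using this

theorem comp_neg (htc : TrigConvex ρ h) : TrigConvex ρ (fun θ => h (-θ)) := by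
  rw [trigConvex_iff_mul_sin_le] at htc ⊢
  refine ⟨fun hρ => ?_, fun hρ θ₁ θ₂ θ hπ h₁ h₂ => ?_⟩
  · obtain ⟨c, hc⟩ := htc.1 hρ
    exact ⟨c, fun θ => hc _⟩
  · have := htc.2 hρ (-θ₂) (-θ₁) (-θ) (by rwa [neg_sub_neg]) (neg_lt_neg h₂) (neg_lt_neg h₁)
    rw [neg_sub_neg, neg_sub_neg, neg_sub_neg] at this
    linarith

theorem integral {α : Type*} [MeasurableSpace α] {μ : Measure α} {F : α → ℝ → ℝ}
    (hF : ∀ t, TrigConvex ρ (F t)) (hint : ∀ θ, Integrable (fun t => F t θ) μ) :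
    TrigConvex ρ (fun θ => ∫ t, F t θ ∂μ) := by
  simp only [trigConvex_iff_mul_sin_le] at hF ⊢
  refine ⟨fun hρ => ?_, fun hρ θ₁ θ₂ θ hπ h₁ h₂ => ?_⟩
  · choose c hc using fun t => (hF t).1 hρ
    exact ⟨∫ t, c t ∂μ, fun θ => by simp only [hc]⟩
  · rw [← integral_const_mul, ← integral_const_mul, ← integral_const_mul,
      ← integral_add ((hint _).const_mul _) ((hint _).const_mul _)]
    exact integral_mono ((hint _).const_mul _)
      (((hint _).const_mul _).add ((hint _).const_mul _)) fun t => (hF t).2 hρ θ₁ θ₂ θ hπ h₁ h₂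

theorem convolution {μ : Measure ℝ} {ψ : ℝ → ℝ} (htc : TrigConvex ρ h) (hψ : ∀ t, 0 ≤ ψ t)
    (hex : ConvolutionExists ψ h (lsmul ℝ ℝ) μ) : TrigConvex ρ (ψ ⋆[lsmul ℝ ℝ, μ] h) := by
  have := TrigConvex.integral (μ := μ) (fun t => (htc.comp_sub_const t).const_mul (hψ t))
    fun θ => by simpa [ConvolutionExistsAt] using hex θ
  convert this using 1
  ext θ
  simp [convolution_def]

theorem continuousWithinAt_Ioi (htc : TrigConvex ρ h) (hρ : 0 < ρ) (θ₀ : ℝ) :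
    ContinuousWithinAt h (Ioi θ₀) θ₀ := by
  have H := (trigConvex_iff_mul_sin_le.1 htc).2 hρ
  -- with `δ = ρ⁻¹`, every window used below has length `< 2δ`, and `ρ · 2δ = 2 < π`
  set δ := ρ⁻¹
  have hδ : 0 < δ := inv_pos.2 hρ
  have hρδ : ρ * δ = 1 := mul_inv_cancel₀ hρ.ne'
  have hsin : 0 < sin 1 := sin_pos_of_pos_of_lt_pi one_pos (by linarith [pi_gt_three])
  have hupper : ∀ θ ∈ Ioo θ₀ (θ₀ + δ),
      sin 1 * h θ ≤ sin (ρ * (θ₀ + δ - θ)) * h θ₀ + sin (ρ * (θ - θ₀)) * h (θ₀ + δ) :=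
    fun θ hθ => by
      simpa only [add_sub_cancel_left, hρδ] using
        H θ₀ (θ₀ + δ) θ (by rw [add_sub_cancel_left, hρδ]; linarith [pi_gt_three]) hθ.1 hθ.2
  have hlower : ∀ θ ∈ Ioo θ₀ (θ₀ + δ),
      sin (ρ * (θ - (θ₀ - δ))) * h θ₀ - sin (ρ * (θ - θ₀)) * h (θ₀ - δ) ≤ sin 1 * h θ :=
    fun θ hθ => by
      have := H (θ₀ - δ) θ θ₀ (by nlinarith [hθ.2, pi_gt_three]) (by linarith) hθ.1
      rw [sub_sub_cancel, hρδ] at this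
      linarith
  have hsqueeze : Tendsto (fun θ => sin 1 * h θ) (𝓝[>] θ₀) (𝓝 (sin 1 * h θ₀)) := by
    have hwindow : Ioo θ₀ (θ₀ + δ) ∈ 𝓝[>] θ₀ := Ioo_mem_nhdsGT (by linarith)
    refine tendsto_of_tendsto_of_tendsto_of_le_of_le' ?_ ?_
      (mem_of_superset hwindow hlower) (mem_of_superset hwindow hupper)
    · have hL : Continuous fun θ =>
          sin (ρ * (θ - (θ₀ - δ))) * h θ₀ - sin (ρ * (θ - θ₀)) * h (θ₀ - δ) := by fun_prop
      convert (hL.tendsto θ₀).mono_left nhdsWithin_le_nhds using 2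
      simp [hρδ]
    · have hU : Continuous fun θ =>
          sin (ρ * (θ₀ + δ - θ)) * h θ₀ + sin (ρ * (θ - θ₀)) * h (θ₀ + δ) := by fun_prop
      convert (hU.tendsto θ₀).mono_left nhdsWithin_le_nhds using 2
      simp [hρδ]
  unfold ContinuousWithinAt
  simpa only [inv_mul_cancel_left₀ hsin.ne'] using hsqueeze.const_mul (sin 1)⁻¹

theorem continuous (htc : TrigConvex ρ h) (hρ : 0 ≤ ρ) : Continuous h := by
  rcases hρ.eq_or_lt with rfl | hρ
  · obtain ⟨c, hc⟩ := htc.1 rfl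
    simpa only [funext hc] using continuous_const
  refine continuous_iff_continuousAt.2 fun θ₀ =>
    continuousAt_iff_continuous_left'_right'.2 ⟨?_, htc.continuousWithinAt_Ioi hρ θ₀⟩
  have := (htc.comp_neg.continuousWithinAt_Ioi hρ (-θ₀)).comp continuous_neg.continuousWithinAt
    (fun _ hθ => neg_lt_neg (mem_Iio.1 hθ) : MapsTo Neg.neg (Iio θ₀) (Ioi (-θ₀)))
  simpa only [Function.comp_def, neg_neg] using this

theorem exists_contDiff_abs_sub_le (htc : TrigConvex ρ h) (hρ : 0 ≤ ρ)
    (hper : Periodic h (2 * π)) (hpos : ∀ θ, 0 ≤ h θ) {ε : ℝ} (hε : 0 < ε) :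
    ∃ g : ℝ → ℝ, Periodic g (2 * π) ∧ (∀ θ, 0 ≤ g θ) ∧ TrigConvex ρ g ∧ ContDiff ℝ ∞ g ∧
      ∀ θ, |g θ - h θ| ≤ ε := by
  have hc := htc.continuous hρ
  obtain ⟨φ, hφ⟩ := (hper.uniformContinuous_of_continuous two_pi_pos hc)
    |>.exists_dist_normed_convolution_le (μ := volume) hε
  have hex : ConvolutionExists (φ.normed volume) h (lsmul ℝ ℝ) :=
    φ.hasCompactSupport_normed.convolutionExists_left _ φ.continuous_normed hc.locallyIntegrable
  refine ⟨_, hper.convolution _ _, fun θ => integral_nonneg fun t => ?_,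
    htc.convolution φ.nonneg_normed hex,
    φ.hasCompactSupport_normed.contDiff_convolution_left _ φ.contDiff_normed hc.locallyIntegrable,
    hφ⟩
  exact smul_nonneg (φ.nonneg_normed t) (hpos _)

end TrigConvex

theorem antitone_add_three_mul_half_pow {u : ℕ → ℝ} {a : ℝ} (hu : ∀ n, |u n - a| ≤ (1 / 2) ^ n) :
    Antitone fun n => u n + 3 * (1 / 2 : ℝ) ^ n := by
  refine antitone_nat_of_succ_le fun n => ?_
  have hn := abs_le.1 (hu n)
  have hn1 := abs_le.1 (hu (n + 1))
  rw [pow_succ] at hn1 ⊢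
  linarith [hn.1, hn1.2]

theorem tendsto_add_three_mul_half_pow {u : ℕ → ℝ} {a : ℝ} (hu : ∀ n, |u n - a| ≤ (1 / 2) ^ n) :
    Tendsto (fun n => u n + 3 * (1 / 2 : ℝ) ^ n) atTop (𝓝 a) := by
  have hhalf : Tendsto (fun n : ℕ => (1 / 2 : ℝ) ^ n) atTop (𝓝 0) :=
    tendsto_pow_atTop_nhds_zero_of_lt_one (by norm_num) (by norm_num)
  have hu' : Tendsto u atTop (𝓝 a) := by
    rw [tendsto_iff_dist_tendsto_zero]
    exact squeeze_zero (fun n => dist_nonneg) (fun n => (Real.dist_eq _ _).trans_le (hu n)) hhalf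
  simpa using hu'.add (hhalf.const_mul 3)

/-- Every nonnegative `2π`-periodic `ρ`-trigonometrically convex function
(`ρ ≥ 0`) is the pointwise decreasing limit of a sequence of nonnegative `2π`-periodic
`ρ`-trigonometrically convex functions of class `C²`. -/
theorem trigConvex_smooth_approximation (ρ : ℝ) (hρ : 0 ≤ ρ) (h : ℝ → ℝ)
    (hper : Function.Periodic h (2 * Real.pi)) (hpos : ∀ θ, 0 ≤ h θ)
    (htc : TrigConvex ρ h) :
    ∃ hn : ℕ → ℝ → ℝ,
      (∀ n, Function.Periodic (hn n) (2 * Real.pi) ∧ (∀ θ, 0 ≤ hn n θ) ∧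
        TrigConvex ρ (hn n) ∧ ContDiff ℝ 2 (hn n)) ∧
      (∀ θ, Antitone fun n => hn n θ) ∧
      (∀ θ, Filter.Tendsto (fun n => hn n θ) Filter.atTop (nhds (h θ))) := by
  choose g hper' hpos' htc' hsmooth happrox using fun n : ℕ =>
    htc.exists_contDiff_abs_sub_le hρ hper hpos (pow_pos (by norm_num : (0 : ℝ) < 1 / 2) n)
  have hshift : ∀ n : ℕ, 0 ≤ 3 * (1 / 2 : ℝ) ^ n := fun n => by positivity
  refine ⟨fun n θ => g n θ + 3 * (1 / 2 : ℝ) ^ n, fun n => ⟨?_, fun θ => ?_, ?_, ?_⟩,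
    fun θ => antitone_add_three_mul_half_pow fun n => happrox n θ,
    fun θ => tendsto_add_three_mul_half_pow fun n => happrox n θ⟩
  · exact fun θ => congrArg (· + 3 * (1 / 2 : ℝ) ^ n) (hper' n θ)
  · exact add_nonneg (hpos' n θ) (hshift n)
  · exact (htc' n).add_const (hshift n)
  · exact (contDiff_infty.1 (hsmooth n) 2).add contDiff_const
end
end
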